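/- Let A be a Hermitian N₁×N₁ complex matrix with exactly c eigenvalues (with multiplicity) ≤ −1/2 and the remaining eigenvalues ≥ 1/2, and let B be a Hermitian N₂×N₂ matrix with all eigenvalues in [−1/4, 1/4]. Let C = A ⊕ B acting on ℂ^{N₁} ⊕ ℂ^{N₂}. Then the eigenspace of C for the eigenvalue λ_c(C) equals {0} ⊕ ker(B − λ_0(B)·I). Consequently, for every unit vector u ∈ ℂ^{N₂}, ‖Π_c (0 ⊕ u)‖² = ‖Π₀^B u‖², where Π_c is the orthogonal projector onto the λ_c(C)-eigenspace of C and Π₀^B is the orthogonal projector onto the ground space of B; in particular, if a guiding state u has squared overlap at least δ with the ground space of B, then 0 ⊕ u has squared overlap at least δ with the λ_c(C)-eigenspace of C. -/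

import Mathlib

/-!
Since every eigenvalue of `A` is at distance at least `1/4` from `μ := λ₀(B) ∈ [-1/4, 1/4]`,
and `χ_C = χ_A χ_B` makes the spectrum of `C` the union of those of `A` and `B`, exactly `c`
eigenvalues of `C` lie below `μ` and more than `c` lie at or below it; so `λ_c(C) = μ`.
As `μ` is not an eigenvalue of `A`, an eigenvector `x ⊕ y` of `C` for `μ` has `x = 0`, so the
`μ`-eigenspace of `C` is the image of that of `B` under the isometry `u ↦ 0 ⊕ u`, and
isometries commute with orthogonal projections.
-/

/-- Eigenvalues of a Hermitian matrix, listed in non-decreasing order with multiplicity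
(junk value `0` for non-Hermitian matrices). -/
noncomputable def eigs {N : ℕ} (A : Matrix (Fin N) (Fin N) ℂ) : Fin N → ℝ :=
  if hA : A.IsHermitian then hA.eigenvalues ∘ Tuple.sort hA.eigenvalues else 0

/-- The block-diagonal matrix `A ⊕ B`. -/
noncomputable def blockDiag {N₁ N₂ : ℕ} (A : Matrix (Fin N₁) (Fin N₁) ℂ)
    (B : Matrix (Fin N₂) (Fin N₂) ℂ) : Matrix (Fin (N₁ + N₂)) (Fin (N₁ + N₂)) ℂ :=
  Matrix.reindex finSumFinEquiv finSumFinEquiv (Matrix.fromBlocks A 0 0 B)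

/-- The eigenspace of a matrix for the (real) eigenvalue `μ`, as a subspace of
Euclidean space. -/
noncomputable def eigSpace {N : ℕ} (A : Matrix (Fin N) (Fin N) ℂ) (μ : ℝ) :
    Submodule ℂ (EuclideanSpace ℂ (Fin N)) :=
  Module.End.eigenspace (Matrix.toEuclideanLin A) (μ : ℂ)

/-- The embedding `u ↦ 0 ⊕ u` of `ℂ^{N₂}` into `ℂ^{N₁} ⊕ ℂ^{N₂}`. -/
def embed₂ {N₁ N₂ : ℕ} (u : EuclideanSpace ℂ (Fin N₂)) :
    EuclideanSpace ℂ (Fin (N₁ + N₂)) :=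
  WithLp.toLp 2 (Fin.append (0 : Fin N₁ → ℂ) u)

open Finset
open scoped Matrix

lemma Fin.append_eq_append_iff {α : Type*} {m n : ℕ} {x x' : Fin m → α} {y y' : Fin n → α} :
    Fin.append x y = Fin.append x' y' ↔ x = x' ∧ y = y' :=
  (Fin.appendEquiv m n).injective.eq_iff.trans Prod.mk_inj

lemma Fin.smul_append {M α : Type*} [SMul M α] {m n : ℕ} (c : M) (x : Fin m → α)
    (y : Fin n → α) : c • Fin.append x y = Fin.append (c • x) (c • y) := by
  ext k
  refine Fin.addCases (fun i ↦ ?_) (fun j ↦ ?_) k <;> simp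

lemma Fin.append_comp_finSumFinEquiv {α : Type*} {m n : ℕ} (x : Fin m → α) (y : Fin n → α) :
    Fin.append x y ∘ finSumFinEquiv = Sum.elim x y := by
  ext (i | j) <;> simp

lemma Fin.card_filter_eq_of_iff {n c : ℕ} (hc : c ≤ n) {p : Fin n → Prop} [DecidablePred p]
    (hp : ∀ i, p i ↔ (i : ℕ) < c) : #{i | p i} = c := by
  rw [filter_congr fun i _ ↦ hp i, Fin.card_filter_val_lt, min_eq_right hc]

lemma Monotone.eq_of_card_lt_le_card {α : Type*} [LinearOrder α] {n : ℕ} {f : Fin n → α}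
    (hf : Monotone f) {k : Fin n} {a : α} (hlt : #{i | f i < a} ≤ k)
    (hle : k < #{i | f i ≤ a}) : f k = a := by
  rcases lt_trichotomy (f k) a with h | h | h
  · have hsub : Iic k ⊆ ({i | f i < a} : Finset _) := fun i hi ↦
      (mem_filter_univ i).mpr ((hf (mem_Iic.mp hi)).trans_lt h)
    have := card_le_card hsub
    rw [Fin.card_Iic] at this
    omega
  · exact h
  · have hsub : ({i | f i ≤ a} : Finset _) ⊆ Iio k := fun i hi ↦
      mem_Iio.mpr <| lt_of_not_ge fun hki ↦
        (h.trans_le (hf hki)).not_ge ((mem_filter_univ i).mp hi)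
    have := card_le_card hsub
    rw [Fin.card_Iio] at this
    omega

lemma LinearIsometry.norm_orthogonalProjectionOnto_map_apply {𝕜 E E' : Type*} [RCLike 𝕜]
    [NormedAddCommGroup E] [NormedAddCommGroup E'] [InnerProductSpace 𝕜 E]
    [InnerProductSpace 𝕜 E'] (f : E →ₗᵢ[𝕜] E') (K : Submodule 𝕜 E) [K.HasOrthogonalProjection]
    [(K.map f.toLinearMap).HasOrthogonalProjection] (x : E) :
    ‖(K.map f.toLinearMap).orthogonalProjectionOnto (f x)‖ = ‖K.orthogonalProjectionOnto x‖ := by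
  rw [← Submodule.norm_coe, ← Submodule.norm_coe (K.orthogonalProjectionOnto x),
    ← Submodule.starProjection_apply, ← Submodule.starProjection_apply,
    ← f.map_starProjection, f.norm_map]

section Eigs

variable {N : ℕ} {A : Matrix (Fin N) (Fin N) ℂ}

lemma eigs_eq_comp_sort (hA : A.IsHermitian) :
    eigs A = hA.eigenvalues ∘ Tuple.sort hA.eigenvalues := by
  rw [eigs, dif_pos hA]

lemma monotone_eigs (hA : A.IsHermitian) : Monotone (eigs A) := by
  rw [eigs_eq_comp_sort hA]
  exact Tuple.monotone_sort _

lemma roots_charpoly_eq_map_eigs (hA : A.IsHermitian) :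
    A.charpoly.roots = (univ.val.map (eigs A)).map Complex.ofReal := by
  rw [hA.roots_charpoly_eq_eigenvalues, eigs_eq_comp_sort hA, ← Multiset.map_map hA.eigenvalues,
    Multiset.map_univ_val_equiv, Multiset.map_map]
  rfl

lemma eq_zero_of_mulVec_eq_smul_of_forall_eigs_ne (hA : A.IsHermitian) {μ : ℝ}
    (hμ : ∀ i, eigs A i ≠ μ) {x : Fin N → ℂ} (hx : A *ᵥ x = (μ : ℂ) • x) : x = 0 := by
  by_contra hx0
  have hμA : (μ : ℂ) ∈ spectrum ℂ A := by
    rw [← Matrix.spectrum_toLin']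
    exact Module.End.HasEigenvalue.mem_spectrum
      (Module.End.hasEigenvalue_of_hasEigenvector ⟨by simpa using hx, hx0⟩)
  obtain ⟨_, ⟨i, rfl⟩, hi⟩ := hA.spectrum_eq_image_range ▸ hμA
  obtain ⟨j, hj⟩ : hA.eigenvalues i ∈ Set.range (eigs A) := by
    rw [eigs_eq_comp_sort hA, EquivLike.range_comp]
    exact ⟨i, rfl⟩
  exact hμ j (hj.trans (RCLike.ofReal_inj.mp hi))

end Eigs

lemma mem_eigSpace_iff {N : ℕ} {M : Matrix (Fin N) (Fin N) ℂ} {μ : ℝ}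
    {x : EuclideanSpace ℂ (Fin N)} : x ∈ eigSpace M μ ↔ M *ᵥ x.ofLp = (μ : ℂ) • x.ofLp := by
  rw [eigSpace, Module.End.mem_eigenspace_iff, Matrix.toLpLin_apply]
  exact ⟨congrArg WithLp.ofLp, congrArg (WithLp.toLp 2)⟩

def embed₂ₗᵢ (N₁ N₂ : ℕ) :
    EuclideanSpace ℂ (Fin N₂) →ₗᵢ[ℂ] EuclideanSpace ℂ (Fin (N₁ + N₂)) where
  toFun := embed₂
  map_add' u v := by
    ext k
    refine Fin.addCases (fun i ↦ ?_) (fun j ↦ ?_) k <;> simp [embed₂]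
  map_smul' a u := by
    ext k
    refine Fin.addCases (fun i ↦ ?_) (fun j ↦ ?_) k <;> simp [embed₂]
  norm_map' u := by
    simp [EuclideanSpace.norm_eq, Fin.sum_univ_add, embed₂]

section BlockDiag

variable {N₁ N₂ : ℕ} {A : Matrix (Fin N₁) (Fin N₁) ℂ} {B : Matrix (Fin N₂) (Fin N₂) ℂ}

lemma isHermitian_blockDiag (hA : A.IsHermitian) (hB : B.IsHermitian) :
    (blockDiag A B).IsHermitian :=
  (hA.fromBlocks (by simp) hB).submatrix _

lemma charpoly_blockDiag : (blockDiag A B).charpoly = A.charpoly * B.charpoly := by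
  rw [blockDiag, Matrix.charpoly_reindex, Matrix.charpoly_fromBlocks_zero₁₂]

lemma map_eigs_blockDiag (hA : A.IsHermitian) (hB : B.IsHermitian) :
    univ.val.map (eigs (blockDiag A B)) = univ.val.map (eigs A) + univ.val.map (eigs B) := by
  apply Multiset.map_injective Complex.ofReal_injective
  rw [Multiset.map_add, ← roots_charpoly_eq_map_eigs hA, ← roots_charpoly_eq_map_eigs hB,
    ← roots_charpoly_eq_map_eigs (isHermitian_blockDiag hA hB), charpoly_blockDiag,
    Polynomial.roots_mul (mul_ne_zero A.charpoly_monic.ne_zero B.charpoly_monic.ne_zero)]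

lemma card_filter_eigs_blockDiag (hA : A.IsHermitian) (hB : B.IsHermitian) (p : ℝ → Prop)
    [DecidablePred p] :
    #{k | p (eigs (blockDiag A B) k)} = #{i | p (eigs A i)} + #{j | p (eigs B j)} := by
  have := congrArg (Multiset.countP p) (map_eigs_blockDiag hA hB)
  simpa only [Multiset.countP_add, Multiset.countP_map, ← filter_val, card_val] using this

lemma eigs_blockDiag_eq_eigs_zero (hA : A.IsHermitian) (hB : B.IsHermitian) {c : ℕ}
    (hc : c ≤ N₁) (hN₂ : 0 < N₂) (hlt : ∀ i : Fin N₁, (i : ℕ) < c → eigs A i < eigs B ⟨0, hN₂⟩)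
    (hgt : ∀ i : Fin N₁, c ≤ (i : ℕ) → eigs B ⟨0, hN₂⟩ < eigs A i) :
    eigs (blockDiag A B) ⟨c, lt_add_of_le_of_pos hc hN₂⟩ = eigs B ⟨0, hN₂⟩ := by
  set μ := eigs B ⟨0, hN₂⟩
  have hA_lt : #{i | eigs A i < μ} = c := Fin.card_filter_eq_of_iff hc fun i ↦
    ⟨fun h ↦ lt_of_not_ge fun hi ↦ (hgt i hi).not_gt h, hlt i⟩
  have hA_le : #{i | eigs A i ≤ μ} = c := Fin.card_filter_eq_of_iff hc fun i ↦
    ⟨fun h ↦ lt_of_not_ge fun hi ↦ (hgt i hi).not_ge h, fun hi ↦ (hlt i hi).le⟩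
  have hB_lt : #{j | eigs B j < μ} = 0 := by
    rw [card_eq_zero, filter_eq_empty_iff]
    exact fun j _ ↦ not_lt.mpr (monotone_eigs hB (Nat.zero_le _))
  have hB_le : 0 < #{j | eigs B j ≤ μ} := card_pos.mpr ⟨⟨0, hN₂⟩, by simp [μ]⟩
  apply (monotone_eigs (isHermitian_blockDiag hA hB)).eq_of_card_lt_le_card
  · rw [card_filter_eigs_blockDiag hA hB (· < μ), hA_lt, hB_lt]; rfl
  · rw [card_filter_eigs_blockDiag hA hB (· ≤ μ), hA_le]; exact Nat.lt_add_of_pos_right hB_le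

lemma blockDiag_mulVec_append (x : Fin N₁ → ℂ) (y : Fin N₂ → ℂ) :
    blockDiag A B *ᵥ Fin.append x y = Fin.append (A *ᵥ x) (B *ᵥ y) := by
  ext k
  refine Fin.addCases (fun i ↦ ?_) (fun j ↦ ?_) k <;>
    simp [blockDiag, Matrix.submatrix_mulVec_equiv, Matrix.fromBlocks_mulVec,
      Fin.append_comp_finSumFinEquiv]

lemma blockDiag_mulVec_append_eq_smul_iff (μ : ℂ) (x : Fin N₁ → ℂ) (y : Fin N₂ → ℂ) :
    blockDiag A B *ᵥ Fin.append x y = μ • Fin.append x y ↔ A *ᵥ x = μ • x ∧ B *ᵥ y = μ • y := by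
  rw [blockDiag_mulVec_append, Fin.smul_append, Fin.append_eq_append_iff]

lemma setOf_blockDiag_mulVec_eq_smul {μ : ℂ} (hA : ∀ x, A *ᵥ x = μ • x → x = 0) :
    {v | blockDiag A B *ᵥ v = μ • v} = Fin.append 0 '' {u | B *ᵥ u = μ • u} := by
  ext v
  obtain ⟨x, y, rfl⟩ : ∃ x y, Fin.append x y = v := ⟨_, _, Fin.append_castAdd_natAdd⟩
  simp only [Set.mem_ofPred_eq, Set.mem_image, blockDiag_mulVec_append_eq_smul_iff,
    Fin.append_eq_append_iff]
  constructor
  · rintro ⟨hx, hy⟩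
    exact ⟨y, hy, (hA x hx).symm, rfl⟩
  · rintro ⟨u, hu, rfl, rfl⟩
    simpa using hu

lemma eigSpace_blockDiag {μ : ℝ}
    (hA : ∀ x, A *ᵥ x = (μ : ℂ) • x → x = 0) :
    eigSpace (blockDiag A B) μ = (eigSpace B μ).map (embed₂ₗᵢ N₁ N₂).toLinearMap := by
  ext v
  have hv := Set.ext_iff.mp (setOf_blockDiag_mulVec_eq_smul (B := B) hA) v.ofLp
  simp only [Set.mem_ofPred_eq, Set.mem_image] at hv
  rw [mem_eigSpace_iff, hv, Submodule.mem_map]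
  constructor
  · rintro ⟨u, hu, huv⟩
    exact ⟨WithLp.toLp 2 u, mem_eigSpace_iff.mpr hu, congrArg (WithLp.toLp 2) huv⟩
  · rintro ⟨u, hu, rfl⟩
    exact ⟨u.ofLp, mem_eigSpace_iff.mp hu, rfl⟩

end BlockDiag

/-- the `λ_c(C)`-eigenspace of `C = A ⊕ B` is `{0} ⊕ ker(B − λ_0(B))`, so
orthogonal projections of `0 ⊕ u` onto it have the same norm as projections of `u` onto
the ground space of `B`; in particular squared overlap at least `δ` is preserved. -/
theorem blockDiag_eigenspace_and_overlap
    (N₁ N₂ c : ℕ) (hc : c ≤ N₁) (hN₂ : 0 < N₂)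
    (A : Matrix (Fin N₁) (Fin N₁) ℂ) (hA : A.IsHermitian)
    (B : Matrix (Fin N₂) (Fin N₂) ℂ) (hB : B.IsHermitian)
    (hAneg : ∀ i : Fin N₁, (i : ℕ) < c → eigs A i ≤ -(1 / 2))
    (hApos : ∀ i : Fin N₁, c ≤ (i : ℕ) → (1 / 2 : ℝ) ≤ eigs A i)
    (hBsmall : ∀ j : Fin N₂, eigs B j ∈ Set.Icc (-(1 / 4) : ℝ) (1 / 4)) :
    ({v : Fin (N₁ + N₂) → ℂ |
        (blockDiag A B).mulVec v
          = ((eigs (blockDiag A B) ⟨c, by omega⟩ : ℝ) : ℂ) • v}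
      = (fun u : Fin N₂ → ℂ => Fin.append (0 : Fin N₁ → ℂ) u) ''
          {u : Fin N₂ → ℂ | B.mulVec u = ((eigs B ⟨0, hN₂⟩ : ℝ) : ℂ) • u}) ∧
    (∀ u : EuclideanSpace ℂ (Fin N₂), ‖u‖ = 1 →
      ‖Submodule.orthogonalProjectionOnto
          (eigSpace (blockDiag A B) (eigs (blockDiag A B) ⟨c, by omega⟩))
          (embed₂ (N₁ := N₁) u)‖ ^ 2
        = ‖Submodule.orthogonalProjectionOnto (eigSpace B (eigs B ⟨0, hN₂⟩)) u‖ ^ 2) ∧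
    (∀ (δ : ℝ) (u : EuclideanSpace ℂ (Fin N₂)), ‖u‖ = 1 →
      δ ≤ ‖Submodule.orthogonalProjectionOnto (eigSpace B (eigs B ⟨0, hN₂⟩)) u‖ ^ 2 →
      δ ≤ ‖Submodule.orthogonalProjectionOnto
            (eigSpace (blockDiag A B) (eigs (blockDiag A B) ⟨c, by omega⟩))
            (embed₂ (N₁ := N₁) u)‖ ^ 2) := by
  set μ := eigs B ⟨0, hN₂⟩
  have hμ := hBsmall ⟨0, hN₂⟩
  have hlt : ∀ i : Fin N₁, (i : ℕ) < c → eigs A i < μ := fun i hi ↦ by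
    linarith [hAneg i hi, hμ.1]
  have hgt : ∀ i : Fin N₁, c ≤ (i : ℕ) → μ < eigs A i := fun i hi ↦ by
    linarith [hApos i hi, hμ.2]
  have hμc : eigs (blockDiag A B) ⟨c, by omega⟩ = μ :=
    eigs_blockDiag_eq_eigs_zero hA hB hc hN₂ hlt hgt
  have hA₀ : ∀ x, A *ᵥ x = (μ : ℂ) • x → x = 0 := fun _ ↦
    eq_zero_of_mulVec_eq_smul_of_forall_eigs_ne hA fun i ↦
      (lt_or_ge (i : ℕ) c).elim (hlt i · |>.ne) (hgt i · |>.ne')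
  have hproj : ∀ u, ‖Submodule.orthogonalProjectionOnto
      (eigSpace (blockDiag A B) (eigs (blockDiag A B) ⟨c, by omega⟩)) (embed₂ (N₁ := N₁) u)‖
        = ‖Submodule.orthogonalProjectionOnto (eigSpace B μ) u‖ := fun u ↦ by
    rw [hμc, eigSpace_blockDiag (B := B) hA₀]
    exact (embed₂ₗᵢ N₁ N₂).norm_orthogonalProjectionOnto_map_apply _ u
  refine ⟨?_, fun u _ ↦ by rw [hproj], fun δ u _ hδ ↦ by rwa [hproj]⟩
  rw [hμc]
  exact setOf_blockDiag_mulVec_eq_smul hA₀
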